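/- arXiv:2107.11689 — 4 statements merged into one kernel-verified Lean document; each statement's English description precedes it below -/
import Mathlib

section
/- Let I be an open real interval, (g_n) a sequence of differentiable functions on I converging pointwise to a differentiable function g. Suppose there exists a differentiable function f on I such that g_n + f is convex on I for every n. Then for every x in I, g_n'(x) converges to g'(x). -/
/-!
For a convex function, the derivative at `x` is squeezed between the difference quotients on
either side of `x`. Difference quotients at fixed points pass to pointwise limits, and those of
the limit approach its derivative; so every limit point of the derivatives is squeezed onto the
derivative of the limit (Griffiths' lemma). Apply this to the convex functions `g n + f`, which
converge to `glim + f`, and subtract `f' x` from all derivatives.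
-/

open Filter Topology

section Griffiths

variable {ι : Type*} {l : Filter ι} {S : Set ℝ} {φ : ι → ℝ → ℝ} {φ' : ι → ℝ} {ψ : ℝ → ℝ}
  {ψ' x : ℝ}

theorem tendsto_slope_of_tendsto {y z : ℝ}
    (hy : Tendsto (fun n => φ n y) l (𝓝 (ψ y))) (hz : Tendsto (fun n => φ n z) l (𝓝 (ψ z))) :
    Tendsto (fun n => slope (φ n) y z) l (𝓝 (slope ψ y z)) := by
  simp only [slope_def_field]
  exact (hz.sub hy).div_const _

theorem eventually_lt_hasDerivAt_of_convexOn (hconv : ∀ n, ConvexOn ℝ S (φ n)) (hS : S ∈ 𝓝 x)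
    (hφ : ∀ n, HasDerivAt (φ n) (φ' n) x) (hψ : HasDerivAt ψ ψ' x)
    (hlim : ∀ y ∈ S, Tendsto (fun n => φ n y) l (𝓝 (ψ y))) {c : ℝ} (hc : c < ψ') :
    ∀ᶠ n in l, c < φ' n := by
  have hslope : ∀ᶠ z in 𝓝[<] x, c < slope ψ z x := by
    filter_upwards [(hasDerivAt_iff_tendsto_slope_left_right.mp hψ).1.eventually
      (eventually_gt_nhds hc)] with z hz
    rwa [slope_comm]
  obtain ⟨z, ⟨hzc, hzS⟩, hzx⟩ :=
    ((hslope.and (mem_nhdsWithin_of_mem_nhds hS)).and self_mem_nhdsWithin).exists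
  have hxS : x ∈ S := mem_of_mem_nhds hS
  filter_upwards [(tendsto_slope_of_tendsto (hlim z hzS) (hlim x hxS)).eventually
    (eventually_gt_nhds hzc)] with n hn
  exact hn.trans_le ((hconv n).slope_le_of_hasDerivAt hzS hxS hzx (hφ n))

theorem eventually_hasDerivAt_lt_of_convexOn (hconv : ∀ n, ConvexOn ℝ S (φ n)) (hS : S ∈ 𝓝 x)
    (hφ : ∀ n, HasDerivAt (φ n) (φ' n) x) (hψ : HasDerivAt ψ ψ' x)
    (hlim : ∀ y ∈ S, Tendsto (fun n => φ n y) l (𝓝 (ψ y))) {c : ℝ} (hc : ψ' < c) :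
    ∀ᶠ n in l, φ' n < c := by
  have hslope : ∀ᶠ y in 𝓝[>] x, slope ψ x y < c :=
    (hasDerivAt_iff_tendsto_slope_left_right.mp hψ).2.eventually (eventually_lt_nhds hc)
  obtain ⟨y, ⟨hyc, hyS⟩, hxy⟩ :=
    ((hslope.and (mem_nhdsWithin_of_mem_nhds hS)).and self_mem_nhdsWithin).exists
  have hxS : x ∈ S := mem_of_mem_nhds hS
  filter_upwards [(tendsto_slope_of_tendsto (hlim x hxS) (hlim y hyS)).eventually
    (eventually_lt_nhds hyc)] with n hn
  exact ((hconv n).le_slope_of_hasDerivAt hxS hyS hxy (hφ n)).trans_lt hn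

theorem tendsto_hasDerivAt_of_convexOn (hconv : ∀ n, ConvexOn ℝ S (φ n)) (hS : S ∈ 𝓝 x)
    (hφ : ∀ n, HasDerivAt (φ n) (φ' n) x) (hψ : HasDerivAt ψ ψ' x)
    (hlim : ∀ y ∈ S, Tendsto (fun n => φ n y) l (𝓝 (ψ y))) :
    Tendsto φ' l (𝓝 ψ') :=
  tendsto_order.mpr ⟨fun _ hc => eventually_lt_hasDerivAt_of_convexOn hconv hS hφ hψ hlim hc,
    fun _ hc => eventually_hasDerivAt_lt_of_convexOn hconv hS hφ hψ hlim hc⟩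

end Griffiths

/-- Extension of Griffiths' lemma to differences of convex functions:
if differentiable `g n` converge pointwise on an open interval `I = Ioo a b`
to a differentiable `g`, and there is a differentiable `f` such that each
`g n + f` is convex on `I`, then `(g n)' → g'` pointwise on `I`. -/
theorem griffiths_difference_of_convex
    (a b : ℝ) (g : ℕ → ℝ → ℝ) (glim f : ℝ → ℝ)
    (hg : ∀ n, ∀ x ∈ Set.Ioo a b, DifferentiableAt ℝ (g n) x)
    (hglim : ∀ x ∈ Set.Ioo a b, DifferentiableAt ℝ glim x)
    (hf : ∀ x ∈ Set.Ioo a b, DifferentiableAt ℝ f x)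
    (hconv : ∀ n, ConvexOn ℝ (Set.Ioo a b) (fun x => g n x + f x))
    (hpt : ∀ x ∈ Set.Ioo a b, Tendsto (fun n => g n x) atTop (nhds (glim x))) :
    ∀ x ∈ Set.Ioo a b, Tendsto (fun n => deriv (g n) x) atTop (nhds (deriv glim x)) := by
  intro x hx
  have hsum : Tendsto (fun n => deriv (g n) x + deriv f x) atTop
      (𝓝 (deriv glim x + deriv f x)) :=
    tendsto_hasDerivAt_of_convexOn hconv (isOpen_Ioo.mem_nhds hx)
      (fun n => (hg n x hx).hasDerivAt.add (hf x hx).hasDerivAt)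
      ((hglim x hx).hasDerivAt.add (hf x hx).hasDerivAt)
      (fun y hy => (hpt y hy).add tendsto_const_nhds)
  simpa using hsum.sub_const (deriv f x)
end

section
/- Let p and p̄ be convex differentiable functions on ℝ. Then for every y ∈ ℝ and every δ > 0, |p'(y) − p̄'(y)| ≤ (1/δ) · Σ_{u ∈ {y−δ, y, y+δ}} |p(u) − p̄(u)| + (p̄'(y+δ) − p̄'(y−δ)). -/
/-- Comparison of derivatives of two convex differentiable functions in terms
of their values at three nearby points. -/
theorem deriv_diff_convex_bound
    (p pbar : ℝ → ℝ)
    (hp : Differentiable ℝ p) (hpconv : ConvexOn ℝ Set.univ p)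
    (hpbar : Differentiable ℝ pbar) (hpbarconv : ConvexOn ℝ Set.univ pbar)
    (y δ : ℝ) (hδ : 0 < δ) :
    |deriv p y - deriv pbar y| ≤
      (1 / δ) * (|p (y - δ) - pbar (y - δ)| + |p y - pbar y| + |p (y + δ) - pbar (y + δ)|)
        + (deriv pbar (y + δ) - deriv pbar (y - δ)) := by
  have h1 : y < y + δ := by linarith
  have h2 : y - δ < y := by linarith
  have h3 : y - δ < y + δ := by linarith
  have triv : ∀ z : ℝ, z ∈ Set.univ := fun z => Set.mem_univ z
  have A1 : deriv p y ≤ (p (y + δ) - p y) / δ := by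
    have := hpconv.deriv_le_slope (triv y) (triv (y + δ)) h1 (hp y)
    rwa [slope_def_field, add_sub_cancel_left] at this
  have A2 : (p y - p (y - δ)) / δ ≤ deriv p y := by
    have := hpconv.slope_le_deriv (triv (y - δ)) (triv y) h2 (hp y)
    rwa [slope_def_field, sub_sub_cancel] at this
  have B1 : deriv pbar y ≤ (pbar (y + δ) - pbar y) / δ := by
    have := hpbarconv.deriv_le_slope (triv y) (triv (y + δ)) h1 (hpbar y)
    rwa [slope_def_field, add_sub_cancel_left] at this
  have B2 : (pbar y - pbar (y - δ)) / δ ≤ deriv pbar y := by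
    have := hpbarconv.slope_le_deriv (triv (y - δ)) (triv y) h2 (hpbar y)
    rwa [slope_def_field, sub_sub_cancel] at this
  have C1 : (pbar (y + δ) - pbar y) / δ ≤ deriv pbar (y + δ) := by
    have := hpbarconv.slope_le_deriv (triv y) (triv (y + δ)) h1 (hpbar (y + δ))
    rwa [slope_def_field, add_sub_cancel_left] at this
  have C2 : deriv pbar (y - δ) ≤ (pbar y - pbar (y - δ)) / δ := by
    have := hpbarconv.deriv_le_slope (triv (y - δ)) (triv y) h2 (hpbar (y - δ))
    rwa [slope_def_field, sub_sub_cancel] at this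
  have e1 : |p (y - δ) - pbar (y - δ)| ≥ -(p (y - δ) - pbar (y - δ)) := neg_le_abs _
  have e1' : |p (y - δ) - pbar (y - δ)| ≥ (p (y - δ) - pbar (y - δ)) := le_abs_self _
  have e2 : |p y - pbar y| ≥ -(p y - pbar y) := neg_le_abs _
  have e2' : |p y - pbar y| ≥ (p y - pbar y) := le_abs_self _
  have e3 : |p (y + δ) - pbar (y + δ)| ≥ -(p (y + δ) - pbar (y + δ)) := neg_le_abs _
  have e3' : |p (y + δ) - pbar (y + δ)| ≥ (p (y + δ) - pbar (y + δ)) := le_abs_self _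
  rw [abs_sub_le_iff]
  have hδ' : δ ≠ 0 := ne_of_gt hδ
  constructor
  · rw [le_div_iff₀ hδ] at A1
    rw [div_le_iff₀ hδ] at B2 C1
    rw [le_div_iff₀ hδ] at C2
    have : deriv p y - deriv pbar y ≤
        (1 / δ) * ((p (y + δ) - pbar (y + δ)) + -(p y - pbar y))
          + (deriv pbar (y + δ) - deriv pbar (y - δ)) := by
      rw [← sub_le_iff_le_add]
      have key : (deriv p y - deriv pbar y - (deriv pbar (y + δ) - deriv pbar (y - δ))) * δ ≤
          (p (y + δ) - pbar (y + δ)) + -(p y - pbar y) := by nlinarith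
      calc deriv p y - deriv pbar y - (deriv pbar (y + δ) - deriv pbar (y - δ))
          = ((deriv p y - deriv pbar y - (deriv pbar (y + δ) - deriv pbar (y - δ))) * δ) * (1/δ) := by
            field_simp
        _ ≤ ((p (y + δ) - pbar (y + δ)) + -(p y - pbar y)) * (1/δ) := by
            apply mul_le_mul_of_nonneg_right key
            positivity
        _ = (1 / δ) * ((p (y + δ) - pbar (y + δ)) + -(p y - pbar y)) := by ring
    refine this.trans ?_
    have habs : (p (y + δ) - pbar (y + δ)) + -(p y - pbar y) ≤
        |p (y - δ) - pbar (y - δ)| + |p y - pbar y| + |p (y + δ) - pbar (y + δ)| := by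
      have := abs_nonneg (p (y - δ) - pbar (y - δ))
      linarith
    have := mul_le_mul_of_nonneg_left habs (by positivity : (0:ℝ) ≤ 1/δ)
    linarith
  · rw [div_le_iff₀ hδ] at A2 C1
    rw [le_div_iff₀ hδ] at B1 C2
    have : deriv pbar y - deriv p y ≤
        (1 / δ) * ((p (y - δ) - pbar (y - δ)) + -(p y - pbar y))
          + (deriv pbar (y + δ) - deriv pbar (y - δ)) := by
      rw [← sub_le_iff_le_add]
      have key : (deriv pbar y - deriv p y - (deriv pbar (y + δ) - deriv pbar (y - δ))) * δ ≤
          (p (y - δ) - pbar (y - δ)) + -(p y - pbar y) := by nlinarith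
      calc deriv pbar y - deriv p y - (deriv pbar (y + δ) - deriv pbar (y - δ))
          = ((deriv pbar y - deriv p y - (deriv pbar (y + δ) - deriv pbar (y - δ))) * δ) * (1/δ) := by
            field_simp
        _ ≤ ((p (y - δ) - pbar (y - δ)) + -(p y - pbar y)) * (1/δ) := by
            apply mul_le_mul_of_nonneg_right key
            positivity
        _ = (1 / δ) * ((p (y - δ) - pbar (y - δ)) + -(p y - pbar y)) := by ring
    refine this.trans ?_
    have habs : (p (y - δ) - pbar (y - δ)) + -(p y - pbar y) ≤
        |p (y - δ) - pbar (y - δ)| + |p y - pbar y| + |p (y + δ) - pbar (y + δ)| := by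
      have := abs_nonneg (p (y + δ) - pbar (y + δ))
      linarith
    have := mul_le_mul_of_nonneg_left habs (by positivity : (0:ℝ) ≤ 1/δ)
    linarith
end

section
/- For any x ∈ ℝ, μ, a > 0, the equation q = 𝔼 tanh²(z√(μq) + μξx), where z ∼ N(0,1) and ξ ∼ N(0,a) are independent, has a unique solution q = q(x,μ,a) in (0,1] whenever x ≠ 0 or μ > 1; moreover q(x,μ,a) is strictly increasing in x for x ≥ 0. -/
/-!
Write `G V = 𝔼 tanh²(√V z)` for a standard Gaussian `z`. The sum `z√(μq) + μξx` is a centred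
Gaussian of variance `μq + c`, `c = μ²x²a`, so the equation reads `q = G(μq + c)`.
Since `u ↦ tanh u / u` decreases on `(0, ∞)`, each `V ↦ tanh²(√V z) / (V - c)` decreases on
`(c, ∞)`, hence so does `G V / (V - c)` (Latala–Guerra): `q ↦ G(μq + c) / q` is strictly
decreasing, which allows at most one positive fixed point and, as `G` is strictly increasing,
forces the fixed point to increase with `c`, i.e. with `x ≥ 0`. Existence is the intermediate
value theorem on `[q₀, 1]`, with `q₀ = G c` when `c > 0`; when `c = 0` and `μ > 1` a small `q₀`
works because `G V / V → 𝔼 z² = 1` as `V → 0`.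
-/

open MeasureTheory ProbabilityTheory

noncomputable section

/-- The right-hand side of the replica-symmetric consistency equation:
`𝔼 tanh²(z √(μ q) + μ ξ x)` with `z ∼ N(0,1)`, `ξ ∼ N(0,a)` independent. -/
def rsRHS (μ a x q : ℝ) : ℝ :=
  ∫ p : ℝ × ℝ, Real.tanh (p.1 * Real.sqrt (μ * q) + μ * p.2 * x) ^ 2
    ∂((gaussianReal 0 1).prod (gaussianReal 0 a.toNNReal))

open Real Set Filter Topology Function
open scoped NNReal

namespace Real

theorem hasDerivAt_tanh (x : ℝ) : HasDerivAt tanh (1 / cosh x ^ 2) x := by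
  rw [show tanh = fun y => sinh y / cosh y from funext tanh_eq_sinh_div_cosh]
  refine ((hasDerivAt_sinh x).div (hasDerivAt_cosh x) (cosh_pos x).ne').congr_deriv ?_
  rw [← cosh_sq_sub_sinh_sq x]
  ring

theorem differentiable_tanh : Differentiable ℝ tanh :=
  fun x => (hasDerivAt_tanh x).differentiableAt

theorem continuous_tanh : Continuous tanh :=
  differentiable_tanh.continuous

theorem tanh_strictMono : StrictMono tanh :=
  strictMono_of_deriv_pos fun x => by rw [(hasDerivAt_tanh x).deriv]; positivity

theorem tanh_nonneg {x : ℝ} (hx : 0 ≤ x) : 0 ≤ tanh x :=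
  tanh_zero ▸ tanh_strictMono.monotone hx

theorem tanh_sq_eq_tanh_abs_sq (x : ℝ) : tanh x ^ 2 = tanh |x| ^ 2 := by
  rcases abs_choice x with h | h <;> rw [h]
  rw [tanh_neg, neg_sq]

theorem tanh_sq_lt_tanh_sq {x y : ℝ} (h : |x| < |y|) : tanh x ^ 2 < tanh y ^ 2 := by
  rw [tanh_sq_eq_tanh_abs_sq x, tanh_sq_eq_tanh_abs_sq y]
  exact pow_lt_pow_left₀ (tanh_strictMono h) (tanh_nonneg (abs_nonneg x)) two_ne_zero

theorem tanh_sq_le_tanh_sq {x y : ℝ} (h : |x| ≤ |y|) : tanh x ^ 2 ≤ tanh y ^ 2 := by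
  rw [tanh_sq_eq_tanh_abs_sq x, tanh_sq_eq_tanh_abs_sq y]
  exact pow_le_pow_left₀ (tanh_nonneg (abs_nonneg x)) (tanh_strictMono.monotone h) 2

theorem strictAntiOn_tanh_div_self : StrictAntiOn (fun u => tanh u / u) (Ioi 0) := by
  refine strictAntiOn_of_deriv_neg (convex_Ioi 0)
    (continuous_tanh.continuousOn.div continuousOn_id fun u hu => hu.ne') fun u hu => ?_
  rw [interior_Ioi] at hu
  have hd : HasDerivAt (fun u => tanh u / u) ((1 / cosh u ^ 2 * u - tanh u * 1) / u ^ 2) u :=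
    (hasDerivAt_tanh u).div (hasDerivAt_id' u) hu.ne'
  rw [hd.deriv]
  have hc := cosh_pos u
  have key : u < sinh u * cosh u :=
    (self_lt_sinh_iff.2 hu).trans_le
      (le_mul_of_one_le_right (sinh_pos_iff.2 hu).le (one_le_cosh u))
  refine div_neg_of_neg_of_pos ?_ (pow_pos hu 2)
  rw [tanh_eq_sinh_div_cosh, mul_one, sub_neg, one_div_mul_eq_div,
    div_lt_div_iff₀ (by positivity) hc]
  nlinarith

theorem lipschitzWith_tanh : LipschitzWith 1 tanh :=
  lipschitzWith_of_nnnorm_deriv_le differentiable_tanh fun x => by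
    rw [(hasDerivAt_tanh x).deriv, ← NNReal.coe_le_coe, coe_nnnorm, NNReal.coe_one, norm_eq_abs,
      abs_of_pos (by positivity), div_le_one (by positivity)]
    nlinarith [one_le_cosh x]

theorem abs_tanh_le_abs (x : ℝ) : |tanh x| ≤ |x| := by
  simpa using lipschitzWith_tanh.dist_le_mul x 0

theorem strictAntiOn_tanh_sq_div_sq : StrictAntiOn (fun u => tanh u ^ 2 / u ^ 2) (Ioi 0) := by
  intro u₁ hu₁ u₂ hu₂ hu
  simp only [← div_pow]
  exact pow_lt_pow_left₀ (strictAntiOn_tanh_div_self hu₁ hu₂ hu)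
    (div_nonneg (tanh_nonneg (le_of_lt hu₂)) (le_of_lt hu₂)) two_ne_zero

end Real

theorem map_linear_prod_gaussianReal (s t m₁ m₂ : ℝ) (v₁ v₂ : ℝ≥0) :
    ((gaussianReal m₁ v₁).prod (gaussianReal m₂ v₂)).map (fun p => s * p.1 + t * p.2) =
      gaussianReal (s * m₁ + t * m₂)
        (.mk (s ^ 2) (sq_nonneg s) * v₁ + .mk (t ^ 2) (sq_nonneg t) * v₂) := by
  have h : (fun p : ℝ × ℝ => s * p.1 + t * p.2) =
      (fun p : ℝ × ℝ => p.1 + p.2) ∘ Prod.map (s * ·) (t * ·) := rfl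
  rw [h, ← Measure.map_map (by fun_prop) (by fun_prop),
    ← Measure.map_prod_map _ _ (by fun_prop) (by fun_prop), gaussianReal_map_const_mul,
    gaussianReal_map_const_mul, ← gaussianReal_conv_gaussianReal]
  rfl

instance isOpenPosMeasure_gaussianReal {m : ℝ} {v : ℝ≥0} [NeZero v] :
    (gaussianReal m v).IsOpenPosMeasure :=
  (gaussianReal_absolutelyContinuous' m (NeZero.ne v)).isOpenPosMeasure

theorem integral_sq_gaussianReal_zero_mean (v : ℝ≥0) : ∫ z, z ^ 2 ∂gaussianReal 0 v = v := by
  have := variance_of_integral_eq_zero (μ := gaussianReal 0 v) measurable_id.aemeasurable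
    integral_id_gaussianReal
  simpa [variance_id_gaussianReal] using this.symm

theorem integrable_sq_gaussianReal (m : ℝ) (v : ℝ≥0) :
    Integrable (fun z => z ^ 2) (gaussianReal m v) :=
  (memLp_id_gaussianReal 2).integrable_sq

theorem integral_lt_integral_of_continuous {α : Type*} [TopologicalSpace α] [MeasurableSpace α]
    [OpensMeasurableSpace α] {μ : Measure α} [μ.IsOpenPosMeasure] {f g : α → ℝ}
    (hf : Integrable f μ) (hg : Integrable g μ) (hfc : Continuous f) (hgc : Continuous g)
    (hle : f ≤ g) {x : α} (hx : f x < g x) : ∫ y, f y ∂μ < ∫ y, g y ∂μ := by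
  have := integral_pos_of_integrable_nonneg_nonzero (hgc.sub hfc) (hg.sub hf)
    (fun y => sub_nonneg.2 (hle y)) (sub_ne_zero.2 hx.ne')
  rw [integral_sub' hg hf] at this
  linarith

theorem strictAntiOn_tanh_sq_mul_div_sub {b z : ℝ} (hb : 0 ≤ b) (hz : z ≠ 0) :
    StrictAntiOn (fun V => tanh (√V * z) ^ 2 / (V - b)) (Ioi b) := by
  intro V₁ (hV₁ : b < V₁) V₂ (hV₂ : b < V₂) hV
  obtain ⟨u₁, hu₁_def⟩ : ∃ u, u = √V₁ * |z| := ⟨_, rfl⟩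
  obtain ⟨u₂, hu₂_def⟩ : ∃ u, u = √V₂ * |z| := ⟨_, rfl⟩
  have hu₁ : 0 < u₁ := hu₁_def ▸ mul_pos (sqrt_pos.2 (by linarith)) (abs_pos.2 hz)
  have hu : u₁ < u₂ :=
    hu₁_def ▸ hu₂_def ▸ mul_lt_mul_of_pos_right (sqrt_lt_sqrt (by linarith) hV) (abs_pos.2 hz)
  have hsq₁ : u₁ ^ 2 = V₁ * z ^ 2 := by rw [hu₁_def, mul_pow, sq_sqrt (by linarith), sq_abs]
  have hsq₂ : u₂ ^ 2 = V₂ * z ^ 2 := by rw [hu₂_def, mul_pow, sq_sqrt (by linarith), sq_abs]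
  have habs₁ : tanh (√V₁ * z) ^ 2 = tanh u₁ ^ 2 := by
    rw [tanh_sq_eq_tanh_abs_sq, abs_mul, abs_of_nonneg (sqrt_nonneg _), hu₁_def]
  have habs₂ : tanh (√V₂ * z) ^ 2 = tanh u₂ ^ 2 := by
    rw [tanh_sq_eq_tanh_abs_sq, abs_mul, abs_of_nonneg (sqrt_nonneg _), hu₂_def]
  have hslope : V₁ * tanh u₂ ^ 2 < V₂ * tanh u₁ ^ 2 := by
    have := strictAntiOn_tanh_sq_div_sq hu₁ (hu₁.trans hu) hu
    rw [div_lt_div_iff₀ (pow_pos (hu₁.trans hu) 2) (pow_pos hu₁ 2), hsq₁, hsq₂] at this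
    nlinarith
  have hmono : tanh u₁ ^ 2 ≤ tanh u₂ ^ 2 :=
    pow_le_pow_left₀ (tanh_nonneg hu₁.le) (tanh_strictMono hu).le 2
  dsimp only
  rw [habs₁, habs₂, div_lt_div_iff₀ (by linarith) (by linarith)]
  nlinarith

def meanTanhSq (V : ℝ) : ℝ :=
  ∫ z, tanh (√V * z) ^ 2 ∂gaussianReal 0 1

theorem integrable_tanh_sq_comp {α : Type*} [MeasurableSpace α] {μ : Measure α}
    [IsFiniteMeasure μ] {g : α → ℝ} (hg : AEMeasurable g μ) :
    Integrable (fun x => tanh (g x) ^ 2) μ :=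
  .of_bound ((continuous_tanh.measurable.comp_aemeasurable hg).pow_const 2).aestronglyMeasurable 1
    (ae_of_all _ fun x => by simpa [abs_le] using (tanh_sq_lt_one (g x)).le)

theorem integrable_tanh_sq_sqrt_mul (V : ℝ) :
    Integrable (fun z => tanh (√V * z) ^ 2) (gaussianReal 0 1) :=
  integrable_tanh_sq_comp (by fun_prop)

theorem continuous_tanh_sq_sqrt_mul (V : ℝ) : Continuous fun z => tanh (√V * z) ^ 2 :=
  (continuous_tanh.comp (by fun_prop)).pow 2

theorem meanTanhSq_zero : meanTanhSq 0 = 0 := by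
  simp [meanTanhSq]

theorem meanTanhSq_le_one (V : ℝ) : meanTanhSq V ≤ 1 := by
  simpa [meanTanhSq] using integral_mono (integrable_tanh_sq_sqrt_mul _)
    (integrable_const (1 : ℝ)) fun z => (tanh_sq_lt_one (√V * z)).le

theorem continuous_meanTanhSq : Continuous meanTanhSq :=
  continuous_of_dominated (fun V => (continuous_tanh_sq_sqrt_mul V).aestronglyMeasurable)
    (fun V => ae_of_all _ fun z => by simpa [abs_le] using (tanh_sq_lt_one (√V * z)).le)
    (integrable_const 1)
    (ae_of_all _ fun z => (continuous_tanh.comp (by fun_prop)).pow 2)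

theorem strictMonoOn_meanTanhSq : StrictMonoOn meanTanhSq (Ici 0) := by
  intro V₁ (hV₁ : 0 ≤ V₁) V₂ (hV₂ : 0 ≤ V₂) hV
  have hsqrt : |√V₁| < |√V₂| := by
    rw [abs_of_nonneg (sqrt_nonneg _), abs_of_nonneg (sqrt_nonneg _)]
    exact sqrt_lt_sqrt hV₁ hV
  refine integral_lt_integral_of_continuous (integrable_tanh_sq_sqrt_mul _)
    (integrable_tanh_sq_sqrt_mul _) (continuous_tanh_sq_sqrt_mul _)
    (continuous_tanh_sq_sqrt_mul _) (fun z => ?_) (x := 1) ?_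
  · exact tanh_sq_le_tanh_sq (by rw [abs_mul, abs_mul]; gcongr)
  · exact tanh_sq_lt_tanh_sq (by simpa using hsqrt)

theorem strictAntiOn_meanTanhSq_div_sub {b : ℝ} (hb : 0 ≤ b) :
    StrictAntiOn (fun V => meanTanhSq V / (V - b)) (Ioi b) := by
  intro V₁ hV₁ V₂ hV₂ hV
  simp only [meanTanhSq, ← integral_div]
  refine integral_lt_integral_of_continuous ((integrable_tanh_sq_sqrt_mul _).div_const _)
    ((integrable_tanh_sq_sqrt_mul _).div_const _) ((continuous_tanh_sq_sqrt_mul _).div_const _)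
    ((continuous_tanh_sq_sqrt_mul _).div_const _) (fun z => ?_)
    (x := 1) (strictAntiOn_tanh_sq_mul_div_sub hb one_ne_zero hV₁ hV₂ hV)
  rcases eq_or_ne z 0 with rfl | hz
  · simp
  · exact (strictAntiOn_tanh_sq_mul_div_sub hb hz hV₁ hV₂ hV).le

theorem tendsto_meanTanhSq_sq_div_sq :
    Tendsto (fun s => meanTanhSq (s ^ 2) / s ^ 2) (𝓝[>] 0) (𝓝 1) := by
  have hslope (z : ℝ) : Tendsto (fun s => tanh (s * z) / s) (𝓝[>] 0) (𝓝 z) := by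
    have h : HasDerivAt (fun s => tanh (s * z)) (1 / cosh (0 * z) ^ 2 * (1 * z)) 0 :=
      (hasDerivAt_tanh _).comp 0 ((hasDerivAt_id' 0).mul_const z)
    simpa [div_eq_inv_mul] using h.tendsto_slope_zero_right
  have heq : (fun s => ∫ z, (tanh (s * z) / s) ^ 2 ∂gaussianReal 0 1) =ᶠ[𝓝[>] 0]
      fun s => meanTanhSq (s ^ 2) / s ^ 2 := by
    filter_upwards [self_mem_nhdsWithin] with s (hs : 0 < s)
    simp only [meanTanhSq, sqrt_sq hs.le, div_pow, integral_div]
  have hbound : ∀ᶠ s in 𝓝[>] 0, ∀ᵐ z ∂gaussianReal 0 1, ‖(tanh (s * z) / s) ^ 2‖ ≤ z ^ 2 := by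
    filter_upwards [self_mem_nhdsWithin] with s (hs : 0 < s)
    refine ae_of_all _ fun z => ?_
    rw [norm_of_nonneg (sq_nonneg _), div_pow, div_le_iff₀ (by positivity), ← mul_pow, mul_comm z]
    exact sq_le_sq.2 (abs_tanh_le_abs _)
  rw [← NNReal.coe_one, ← integral_sq_gaussianReal_zero_mean]
  refine (tendsto_integral_filter_of_dominated_convergence _
    (Eventually.of_forall fun s =>
      (((continuous_tanh.comp (by fun_prop)).div_const s).pow 2).aestronglyMeasurable)
    hbound (integrable_sq_gaussianReal 0 1) (ae_of_all _ fun z => (hslope z).pow 2)).congr' heq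

theorem meanTanhSq_eq_integral_gaussianReal (v : ℝ≥0) :
    meanTanhSq v = ∫ y, tanh y ^ 2 ∂gaussianReal 0 v := by
  have hmap : (gaussianReal 0 1).map (√v * ·) = gaussianReal 0 v := by
    rw [gaussianReal_map_const_mul, mul_zero, mul_one]
    congr 1
    exact NNReal.eq (sq_sqrt v.coe_nonneg)
  rw [← hmap, integral_map (f := fun y => tanh y ^ 2) (by fun_prop)
    (continuous_tanh.pow 2).aestronglyMeasurable]
  rfl

theorem rsRHS_eq_meanTanhSq {μ a x q : ℝ} (ha : 0 ≤ a) (hμq : 0 ≤ μ * q) :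
    rsRHS μ a x q = meanTanhSq (μ * q + μ ^ 2 * x ^ 2 * a) := by
  have hmap := map_linear_prod_gaussianReal (√(μ * q)) (μ * x) 0 0 1 a.toNNReal
  rw [mul_zero, mul_zero, add_zero] at hmap
  have hvar : μ * q + μ ^ 2 * x ^ 2 * a =
      ((.mk (√(μ * q) ^ 2) (sq_nonneg _) * 1 + .mk ((μ * x) ^ 2) (sq_nonneg _) * a.toNNReal :
        ℝ≥0) : ℝ) := by
    rw [NNReal.coe_add, NNReal.coe_mul, NNReal.coe_mul, NNReal.coe_mk, NNReal.coe_mk,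
      NNReal.coe_one, Real.coe_toNNReal _ ha, sq_sqrt hμq]
    ring
  rw [hvar, meanTanhSq_eq_integral_gaussianReal, ← hmap,
    integral_map (f := fun y => tanh y ^ 2) (by fun_prop)
      (continuous_tanh.pow 2).aestronglyMeasurable, rsRHS]
  congr 1 with p
  ring_nf

theorem strictAntiOn_meanTanhSq_affine_div {μ c : ℝ} (hμ : 0 < μ) (hc : 0 ≤ c) :
    StrictAntiOn (fun q => meanTanhSq (μ * q + c) / q) (Ioi 0) := by
  intro q₁ (hq₁ : 0 < q₁) q₂ (hq₂ : 0 < q₂) hq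
  have hrescale : ∀ q, 0 < q →
      meanTanhSq (μ * q + c) / q = μ * (meanTanhSq (μ * q + c) / (μ * q + c - c)) := by
    intro q hq
    field_simp
    ring
  simp only [hrescale q₁ hq₁, hrescale q₂ hq₂]
  refine mul_lt_mul_of_pos_left (strictAntiOn_meanTanhSq_div_sub hc ?_ ?_ (by gcongr)) hμ <;>
    simp only [mem_Ioi] <;> nlinarith

theorem exists_le_meanTanhSq_of_pos {μ c : ℝ} (hμ : 0 ≤ μ) (hc : 0 < c) :
    ∃ q₀ ∈ Ioc (0 : ℝ) 1, q₀ ≤ meanTanhSq (μ * q₀ + c) := by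
  have hpos : 0 < meanTanhSq c :=
    meanTanhSq_zero ▸ strictMonoOn_meanTanhSq self_mem_Ici (mem_Ici.2 hc.le) hc
  refine ⟨meanTanhSq c, ⟨hpos, meanTanhSq_le_one c⟩, ?_⟩
  exact strictMonoOn_meanTanhSq.monotoneOn (mem_Ici.2 hc.le) (mem_Ici.2 (by positivity))
    (by nlinarith)

theorem exists_le_meanTanhSq_of_one_lt {μ c : ℝ} (hμ : 1 < μ) (hc : 0 ≤ c) :
    ∃ q₀ ∈ Ioc (0 : ℝ) 1, q₀ ≤ meanTanhSq (μ * q₀ + c) := by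
  have hμ₀ : 0 < μ := one_pos.trans hμ
  obtain ⟨s, hs_slope, hs_small, hs_pos⟩ :
      ∃ s, μ⁻¹ < meanTanhSq (s ^ 2) / s ^ 2 ∧ s ^ 2 ≤ μ ∧ 0 < s := by
    refine ((tendsto_meanTanhSq_sq_div_sq.eventually
      (lt_mem_nhds (inv_lt_one_of_one_lt₀ hμ))).and ?_).exists
    filter_upwards [self_mem_nhdsWithin, Ioo_mem_nhdsGT (sqrt_pos.2 hμ₀)] with s hs hs'
    exact ⟨(lt_sqrt hs.le).1 hs'.2 |>.le, hs⟩
  refine ⟨s ^ 2 / μ, ⟨by positivity, (div_le_one hμ₀).2 hs_small⟩, ?_⟩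
  rw [mul_div_cancel₀ _ hμ₀.ne']
  calc s ^ 2 / μ ≤ meanTanhSq (s ^ 2) := by
        rw [lt_div_iff₀ (by positivity), inv_mul_eq_div] at hs_slope
        exact hs_slope.le
    _ ≤ meanTanhSq (s ^ 2 + c) :=
        strictMonoOn_meanTanhSq.monotoneOn (mem_Ici.2 (by positivity))
          (mem_Ici.2 (by positivity)) (by linarith)

section FixedPoint

variable {φ ψ : ℝ → ℝ}

theorem exists_isFixedPt_mem_Ioc {q₀ : ℝ} (hφ : ContinuousOn φ (Icc q₀ 1))
    (hq₀ : q₀ ∈ Ioc 0 1) (hφq₀ : q₀ ≤ φ q₀) (hφ₁ : φ 1 ≤ 1) :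
    ∃ q ∈ Ioc (0 : ℝ) 1, IsFixedPt φ q := by
  obtain ⟨q, hq, hfix⟩ := intermediate_value_Icc' hq₀.2 (hφ.sub continuousOn_id)
    ⟨sub_nonpos.2 hφ₁, sub_nonneg.2 hφq₀⟩
  exact ⟨q, ⟨hq₀.1.trans_le hq.1, hq.2⟩, sub_eq_zero.1 hfix⟩

theorem Function.IsFixedPt.eq_of_strictAntiOn_div
    (hφ : StrictAntiOn (fun q => φ q / q) (Ioi 0)) {p r : ℝ} (hp : 0 < p) (hr : 0 < r)
    (hfp : IsFixedPt φ p) (hfr : IsFixedPt φ r) : p = r :=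
  hφ.injOn hp hr (by simp only [hfp.eq, hfr.eq, div_self hp.ne', div_self hr.ne'])

theorem Function.IsFixedPt.lt_of_strictAntiOn_div
    (hφ : StrictAntiOn (fun q => φ q / q) (Ioi 0))
    (hφψ : ∀ q, 0 < q → φ q < ψ q) {p r : ℝ} (hp : 0 < p) (hr : 0 < r)
    (hfp : IsFixedPt φ p) (hfr : IsFixedPt ψ r) : p < r := by
  by_contra! hrp
  have h := hφ.antitoneOn hr hp hrp
  simp only [hfp.eq, div_self hp.ne', le_div_iff₀ hr, one_mul] at h
  linarith [hφψ r hr, hfr.eq]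

end FixedPoint

/-- Existence, uniqueness (Latala–Guerra) and strict monotonicity in `x ≥ 0`
of the solution `q = q(x,μ,a) ∈ (0,1]` of the consistency equation
`q = 𝔼 tanh²(z√(μq) + μξx)`. -/
theorem consistency_equation_unique_solution
    (μ a : ℝ) (hμ : 0 < μ) (ha : 0 < a) :
    (∀ x : ℝ, (x ≠ 0 ∨ 1 < μ) →
      ∃! q : ℝ, q ∈ Set.Ioc (0 : ℝ) 1 ∧ q = rsRHS μ a x q) ∧
    (∀ x₁ x₂ q₁ q₂ : ℝ, 0 ≤ x₁ → x₁ < x₂ →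
      q₁ ∈ Set.Ioc (0 : ℝ) 1 → q₁ = rsRHS μ a x₁ q₁ →
      q₂ ∈ Set.Ioc (0 : ℝ) 1 → q₂ = rsRHS μ a x₂ q₂ →
      q₁ < q₂) := by
  have hfix (x : ℝ) {q : ℝ} (hq : 0 < q) :
      q = rsRHS μ a x q ↔ IsFixedPt (fun q => meanTanhSq (μ * q + μ ^ 2 * x ^ 2 * a)) q := by
    rw [rsRHS_eq_meanTanhSq ha.le (mul_pos hμ hq).le, IsFixedPt, eq_comm]
  refine ⟨fun x hx => ?_, fun x₁ x₂ q₁ q₂ hx₁ hx₁₂ hq₁ e₁ hq₂ e₂ => ?_⟩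
  · obtain ⟨q₀, hq₀, hq₀_le⟩ :
        ∃ q₀ ∈ Ioc (0 : ℝ) 1, q₀ ≤ meanTanhSq (μ * q₀ + μ ^ 2 * x ^ 2 * a) := by
      rcases hx with hx | hμ₁
      exacts [exists_le_meanTanhSq_of_pos hμ.le (by positivity),
        exists_le_meanTanhSq_of_one_lt hμ₁ (by positivity)]
    obtain ⟨q, hq, hq_fix⟩ := exists_isFixedPt_mem_Ioc
      (φ := fun q => meanTanhSq (μ * q + μ ^ 2 * x ^ 2 * a))
      (continuous_meanTanhSq.comp (by fun_prop)).continuousOn hq₀ hq₀_le (meanTanhSq_le_one _)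
    refine ⟨q, ⟨hq, (hfix x hq.1).2 hq_fix⟩, fun r ⟨hr, hr_eq⟩ => ?_⟩
    exact ((hfix x hr.1).1 hr_eq).eq_of_strictAntiOn_div
      (strictAntiOn_meanTanhSq_affine_div hμ (by positivity)) hr.1 hq.1 hq_fix
  · have hx₁₂ : μ ^ 2 * x₁ ^ 2 * a < μ ^ 2 * x₂ ^ 2 * a := by gcongr
    refine ((hfix x₁ hq₁.1).1 e₁).lt_of_strictAntiOn_div
      (strictAntiOn_meanTanhSq_affine_div hμ (by positivity)) (fun q hq => ?_)
      hq₁.1 hq₂.1 ((hfix x₂ hq₂.1).1 e₂)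
    exact strictMonoOn_meanTanhSq (mem_Ici.2 (by positivity)) (mem_Ici.2 (by positivity))
      (by linarith)

end
end

section
/- Let p(λ) = sup_{x∈K} φ(x,λ) where K ⊆ ℝ is compact, φ is continuous, convex in λ for each x, and ∂φ/∂λ(x,λ) = g(x) for a continuous strictly increasing function g. Then p is differentiable at λ if and only if the argmax set Ω(λ) = argmax_{x∈K} φ(·,λ) is a singleton {x̄}, and in that case p'(λ) = g(x̄). -/
/-!
Since `∂φ/∂λ = g x` does not depend on `λ`, each `φ x` is affine with slope `g x`, so `p` is a
maximum of affine functions. If `p` is differentiable at `λ`, every maximizer `x̄` gives an affine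
minorant of `p` touching it at `λ`, which forces `p'(λ) = g x̄`; injectivity of `g` then makes the
maximizer unique. Conversely, if `x_μ` maximizes `φ · μ`, then
`p λ + g x̄ (μ - λ) ≤ p μ ≤ p λ + g x_μ (μ - λ)`, and compactness together with the uniqueness of
`x̄` forces `x_μ → x̄` as `μ → λ`, so the two bounds squeeze `p` to have derivative `g x̄`.
-/

open Filter Topology Set Asymptotics

theorem eq_add_mul_sub_of_forall_hasDerivAt {f : ℝ → ℝ} {c : ℝ} (hf : ∀ t, HasDerivAt f c t)
    (a b : ℝ) : f b = f a + c * (b - a) := by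
  have hzero : ∀ t, HasDerivAt (fun s => f s - c * s) 0 t := fun t =>
    ((hf t).sub ((hasDerivAt_id' t).const_mul c)).congr_deriv (by ring)
  have := is_const_of_deriv_eq_zero (fun t => (hzero t).differentiableAt)
    (fun t => (hzero t).deriv) b a
  linarith

theorem HasDerivAt.eq_of_eventually_le_of_eq {f h : ℝ → ℝ} {f' h' a : ℝ}
    (hf : HasDerivAt f f' a) (hh : HasDerivAt h h' a) (hle : ∀ᶠ x in 𝓝 a, f x ≤ h x)
    (heq : f a = h a) : f' = h' := by
  have hmin : IsLocalMin (h - f) a := hle.mono fun x hx => by simp [heq, hx]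
  linarith [hmin.hasDerivAt_eq_zero (hh.sub hf)]

theorem hasDerivAt_of_abs_le_mul_abs {f r : ℝ → ℝ} {c a : ℝ}
    (hf : ∀ᶠ x in 𝓝 a, |f x - f a - c * (x - a)| ≤ r x * |x - a|)
    (hr : Tendsto r (𝓝 a) (𝓝 0)) : HasDerivAt f c a := by
  rw [hasDerivAt_iff_isLittleO]
  have hO : (fun x => f x - f a - (x - a) • c) =O[𝓝 a] fun x => r x * (x - a) :=
    IsBigO.of_bound 1 <| hf.mono fun x hx => by
      simpa [mul_comm (x - a), abs_mul] using
        hx.trans (mul_le_mul_of_nonneg_right (le_abs_self _) (abs_nonneg _))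
  simpa using hO.trans_isLittleO
    ((isLittleO_one_iff ℝ).2 hr |>.mul_isBigO (isBigO_refl (fun x => x - a) _))

theorem IsCompact.tendsto_of_tendsto_isMaxOn_unique {X ι : Type*} [TopologicalSpace X]
    {K : Set X} (hK : IsCompact K) {f : X → ℝ} (hf : ContinuousOn f K) {x₀ : X}
    (hmax : ∀ x ∈ K, x ≠ x₀ → f x < f x₀) {l : Filter ι} {u : ι → X}
    (huK : ∀ᶠ i in l, u i ∈ K) (hu : Tendsto (fun i => f (u i)) l (𝓝 (f x₀))) :
    Tendsto u l (𝓝 x₀) := by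
  refine (nhds_basis_opens x₀).tendsto_right_iff.2 fun U ⟨hx₀U, hU⟩ => ?_
  obtain ⟨b, hb, hbound⟩ := (hK.diff hU).exists_forall_le' (α := ℝᵒᵈ) (hf.mono sdiff_subset)
    (a := OrderDual.toDual (f x₀)) fun x hx => hmax x hx.1 fun h => hx.2 (h ▸ hx₀U)
  filter_upwards [huK, hu.eventually (Ioi_mem_nhds (α := ℝ) (a := OrderDual.ofDual b) hb)]
    with i hiK hi
  by_contra hiU
  exact (hbound (u i) ⟨hiK, hiU⟩ : f (u i) ≤ OrderDual.ofDual b).not_gt hi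

theorem hasDerivAt_of_argmax_unique {K : Set ℝ} (hK : IsCompact K) {φ : ℝ → ℝ → ℝ}
    {g p : ℝ → ℝ} (haff : ∀ x μ ν, φ x ν = φ x μ + g x * (ν - μ)) (hg : ContinuousOn g K)
    (hp : ∀ μ, IsGreatest ((fun x => φ x μ) '' K) (p μ)) {lam xbar : ℝ}
    (hφ : ContinuousOn (fun x => φ x lam) K) (hxbarK : xbar ∈ K) (hxbar : φ xbar lam = p lam)
    (huniq : ∀ x ∈ K, φ x lam = p lam → x = xbar) :
    HasDerivAt p (g xbar) lam := by
  have hle : ∀ y ∈ K, ∀ μ, φ y μ ≤ p μ := fun y hy μ => (hp μ).2 ⟨y, hy, rfl⟩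
  choose x hxK hx using fun μ => (hp μ).1
  have hlower : ∀ μ, p lam + g xbar * (μ - lam) ≤ p μ := fun μ => by
    linarith [haff xbar lam μ, hle xbar hxbarK μ]
  have hupper : ∀ μ, φ (x μ) lam + g (x μ) * (μ - lam) = p μ := fun μ => by
    rw [← haff]; exact hx μ
  obtain ⟨C, hC⟩ := hK.exists_bound_of_continuousOn hg
  -- `x μ` falls short of the maximum at `lam` by at most `2 C |μ - lam|`.
  have hval : Tendsto (fun μ => φ (x μ) lam) (𝓝 lam) (𝓝 (φ xbar lam)) := by
    have hlim : Tendsto (fun μ => p lam - 2 * C * |μ - lam|) (𝓝 lam) (𝓝 (p lam)) :=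
      (by fun_prop : Continuous fun μ => p lam - 2 * C * |μ - lam|).tendsto' lam _ (by simp)
    refine hxbar ▸ tendsto_of_tendsto_of_tendsto_of_le_of_le hlim tendsto_const_nhds
      (fun μ => ?_) fun μ => hle _ (hxK μ) lam
    have hgx : |g (x μ) - g xbar| ≤ 2 * C := by
      have := norm_sub_le_of_le (hC _ (hxK μ)) (hC _ hxbarK)
      rw [Real.norm_eq_abs] at this; linarith
    have := le_abs_self ((g (x μ) - g xbar) * (μ - lam))
    rw [abs_mul] at this
    nlinarith [hlower μ, hupper μ, abs_nonneg (μ - lam)]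
  have hstrict : ∀ y ∈ K, y ≠ xbar → φ y lam < φ xbar lam := fun y hy hne =>
    hxbar ▸ (hle y hy lam).lt_of_ne fun h => hne (huniq y hy h)
  have hconv : Tendsto x (𝓝 lam) (𝓝 xbar) :=
    hK.tendsto_of_tendsto_isMaxOn_unique hφ hstrict (Eventually.of_forall hxK) hval
  have hgconv : Tendsto (fun μ => |g (x μ) - g xbar|) (𝓝 lam) (𝓝 0) := by
    have := ((hg xbar hxbarK).tendsto.comp
      (tendsto_nhdsWithin_iff.2 ⟨hconv, Eventually.of_forall hxK⟩)).sub_const (g xbar)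
    simpa using this.abs
  refine hasDerivAt_of_abs_le_mul_abs (Eventually.of_forall fun μ => ?_) hgconv
  have := le_abs_self ((g (x μ) - g xbar) * (μ - lam))
  rw [abs_mul] at this
  rw [abs_of_nonneg (by linarith [hlower μ])]
  linarith [hupper μ, hle _ (hxK μ) lam]

theorem danskin_differentiability_general
    (K : Set ℝ) (hK : IsCompact K)
    (φ : ℝ → ℝ → ℝ) (hφcont : Continuous (Function.uncurry φ))
    (g : ℝ → ℝ) (hg : Continuous g) (hgmono : StrictMono g)
    (hφderiv : ∀ x lam, HasDerivAt (φ x) (g x) lam)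
    (p : ℝ → ℝ) (hp : ∀ lam, IsGreatest ((fun x => φ x lam) '' K) (p lam)) :
    ∀ lam : ℝ,
      (DifferentiableAt ℝ p lam ↔ ∃! x, x ∈ K ∧ φ x lam = p lam) ∧
      (∀ xbar, xbar ∈ K → φ xbar lam = p lam → DifferentiableAt ℝ p lam →
        deriv p lam = g xbar) := by
  intro lam
  have hderiv : ∀ xbar ∈ K, φ xbar lam = p lam → DifferentiableAt ℝ p lam →
      deriv p lam = g xbar := fun xbar hxK hxmax hd =>
    ((hφderiv xbar lam).eq_of_eventually_le_of_eq hd.hasDerivAt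
      (Eventually.of_forall fun μ => (hp μ).2 ⟨xbar, hxK, rfl⟩) hxmax).symm
  refine ⟨⟨fun hd => ?_, ?_⟩, hderiv⟩
  · obtain ⟨x₀, hx₀K, hx₀⟩ := (hp lam).1
    exact ⟨x₀, ⟨hx₀K, hx₀⟩, fun y ⟨hyK, hy⟩ =>
      hgmono.injective <| (hderiv y hyK hy hd).symm.trans (hderiv x₀ hx₀K hx₀ hd)⟩
  · rintro ⟨xbar, ⟨hxK, hxmax⟩, huniq⟩
    have haff : ∀ x μ ν, φ x ν = φ x μ + g x * (ν - μ) := fun x =>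
      eq_add_mul_sub_of_forall_hasDerivAt (hφderiv x)
    exact (hasDerivAt_of_argmax_unique hK haff hg.continuousOn hp
      (hφcont.uncurry_right lam).continuousOn hxK hxmax
      fun y hy h => huniq y ⟨hy, h⟩).differentiableAt

/-- Danskin-type theorem: for `p(λ) = max_{x ∈ K} φ(x,λ)` with `K` compact,
`φ` continuous and convex in `λ` with `∂φ/∂λ(x,λ) = g(x)` for a continuous
strictly increasing `g`, the function `p` is differentiable at `λ` iff the
argmax set is a singleton `{x̄}`, in which case `p'(λ) = g(x̄)`. -/
theorem danskin_differentiability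
    (K : Set ℝ) (hK : IsCompact K) (hKne : K.Nonempty)
    (φ : ℝ → ℝ → ℝ) (hφcont : Continuous (Function.uncurry φ))
    (hφconv : ∀ x, ConvexOn ℝ Set.univ (φ x))
    (g : ℝ → ℝ) (hg : Continuous g) (hgmono : StrictMono g)
    (hφderiv : ∀ x lam, HasDerivAt (φ x) (g x) lam)
    (p : ℝ → ℝ) (hp : ∀ lam, IsGreatest ((fun x => φ x lam) '' K) (p lam)) :
    ∀ lam : ℝ,
      (DifferentiableAt ℝ p lam ↔ ∃! x, x ∈ K ∧ φ x lam = p lam) ∧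
      (∀ xbar, xbar ∈ K → φ xbar lam = p lam → DifferentiableAt ℝ p lam →
        deriv p lam = g xbar) :=
  danskin_differentiability_general K hK φ hφcont g hg hgmono hφderiv p hp
end
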